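/- Let u : ℝⁿ₊ → ℂ^M be C¹ on a nontangential cone minus a compact set and suppose the nontangential trace of u at x' ∈ ℝ^{n-1} vanishes: lim_{Γ_κ(x') ∋ y → (x',0)} u(y) = 0. Suppose κ₀ ∈ (0, κ) and K₂ ⊂ ℝⁿ₊ is a closed ball that avoids Γ_{κ₀}(x') in the sense that every point y ∈ Γ_{κ₀}(x') \ K₂ can be joined to (x',0) by a rectifiable path γ of length ≤ C yₙ lying in Γ_{κ₀}(x') \ K₂ for a constant C independent of y. Then |u(y)| ≤ C' yₙ · N_κ^{ℝⁿ₊ \ K₂}(∇u)(x') for all y = (y', yₙ) ∈ Γ_{κ₀}(x') \ K₂, where N_κ^{E}(∇u)(x') := ess sup over Γ_κ(x') ∩ E of |∇u| and C' depends only on C. -/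

import Mathlib

noncomputable section

/-- The upper half-space `ℝ^{m+1}₊ = ℝ^m × (0,∞)`, modeled as the `ℓ²` product
`WithLp 2 (ℝ^m × ℝ)` (so the norm is the Euclidean norm of `ℝ^{m+1}`). -/
abbrev HS (m : ℕ) := WithLp 2 (EuclideanSpace ℝ (Fin m) × ℝ)

/-- Tangential (horizontal) component of a point of `ℝ^{m+1}`. -/
def tang {m : ℕ} (z : HS m) : EuclideanSpace ℝ (Fin m) :=
  ((WithLp.equiv 2 (EuclideanSpace ℝ (Fin m) × ℝ)) z).1

/-- Vertical (last) coordinate of a point of `ℝ^{m+1}`. -/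
def ht {m : ℕ} (z : HS m) : ℝ :=
  ((WithLp.equiv 2 (EuclideanSpace ℝ (Fin m) × ℝ)) z).2

/-- The boundary point `(x', 0)` of the upper half-space. -/
def bpt {m : ℕ} (x' : EuclideanSpace ℝ (Fin m)) : HS m :=
  (WithLp.equiv 2 (EuclideanSpace ℝ (Fin m) × ℝ)).symm (x', 0)

/-- The nontangential cone `Γ_κ(x') = {(y', t) ∈ ℝ^{m+1}₊ : |y' - x'| < κ t}`. -/
def cone {m : ℕ} (κ : ℝ) (x' : EuclideanSpace ℝ (Fin m)) : Set (HS m) :=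
  {z | 0 < ht z ∧ ‖tang z - x'‖ < κ * ht z}

open Filter Set Metric


lemma ht_continuous {m : ℕ} : Continuous (ht (m := m)) := by
  have : ht (m := m) = Prod.snd ∘ (WithLp.prodContinuousLinearEquiv 2 ℝ
      (EuclideanSpace ℝ (Fin m)) ℝ) := rfl
  rw [this]; exact continuous_snd.comp (WithLp.prodContinuousLinearEquiv 2 ℝ _ _).continuous

lemma tang_continuous {m : ℕ} : Continuous (tang (m := m)) := by
  have : tang (m := m) = Prod.fst ∘ (WithLp.prodContinuousLinearEquiv 2 ℝ
      (EuclideanSpace ℝ (Fin m)) ℝ) := rfl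
  rw [this]; exact continuous_fst.comp (WithLp.prodContinuousLinearEquiv 2 ℝ _ _).continuous

lemma cone_open {m : ℕ} (κ : ℝ) (x' : EuclideanSpace ℝ (Fin m)) : IsOpen (cone κ x') := by
  have h1 : IsOpen {z : HS m | 0 < ht z} := isOpen_lt continuous_const ht_continuous
  have h2 : IsOpen {z : HS m | ‖tang z - x'‖ < κ * ht z} :=
    isOpen_lt ((tang_continuous.sub continuous_const).norm)
      (continuous_const.mul ht_continuous)
  exact (h1.inter h2)

lemma cone_mono {m : ℕ} {κ κ₀ : ℝ} (h : κ₀ ≤ κ) (x' : EuclideanSpace ℝ (Fin m)) :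
    cone κ₀ x' ⊆ cone κ x' := by
  intro z hz
  exact ⟨hz.1, hz.2.trans_le (by nlinarith [hz.1])⟩

/-- Key mean-value-along-a-path lemma. -/
lemma key_path {E F : Type*} [NormedAddCommGroup E] [NormedSpace ℝ E]
    [NormedAddCommGroup F] [NormedSpace ℝ F]
    {U : Set E} (hU : IsOpen U) {u : E → F} {Nv : ℝ}
    (hdiff : ∀ z ∈ U, DifferentiableAt ℝ u z) (hbound : ∀ z ∈ U, ‖fderiv ℝ u z‖ ≤ Nv)
    {γ : ℝ → E} {a b : ℝ} (hab : a ≤ b) (hcont : ContinuousOn γ (Set.Icc a b))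
    (himg : ∀ t ∈ Set.Icc a b, γ t ∈ U)
    {V : ℝ} (hV : 0 ≤ V) (hNv : 0 ≤ Nv)
    (hvar : eVariationOn γ (Set.Icc a b) ≤ ENNReal.ofReal V) :
    ‖u (γ b) - u (γ a)‖ ≤ Nv * V := by
  -- compact image inside open U
  have hK : IsCompact (γ '' Set.Icc a b) := (isCompact_Icc).image_of_continuousOn hcont
  have hKU : γ '' Set.Icc a b ⊆ U := by rintro _ ⟨t, ht, rfl⟩; exact himg t ht
  obtain ⟨r, hr, hrsub⟩ := hK.exists_thickening_subset_open hU hKU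
  -- uniform continuity
  have huc := Metric.uniformContinuousOn_iff.1
    ((isCompact_Icc (a := a) (b := b)).uniformContinuousOn_of_continuous hcont)
  obtain ⟨δ, hδ, hδ'⟩ := huc r hr
  -- choose n
  obtain ⟨n₀, hn₀⟩ := exists_nat_gt ((b - a) / δ)
  set n : ℕ := n₀ + 1 with hn
  have hnpos : (0:ℝ) < n := by positivity
  set d : ℝ := (b - a) / n with hd
  have hd0 : 0 ≤ d := by
    apply div_nonneg (by linarith) hnpos.le
  have hdδ : d < δ := by
    rw [hd, div_lt_iff₀ hnpos]
    have h : (b - a) / δ < n := hn₀.trans_le (by exact_mod_cast Nat.le_succ n₀)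
    calc b - a = (b - a) / δ * δ := by field_simp
    _ < n * δ := by exact mul_lt_mul_of_pos_right h hδ
    _ = δ * n := mul_comm _ _
  set t : ℕ → ℝ := fun i => a + (min i n : ℕ) * d with htdef
  have htmem : ∀ i, t i ∈ Set.Icc a b := by
    intro i
    constructor
    · have h0 : (0:ℝ) ≤ ((min i n : ℕ):ℝ) := Nat.cast_nonneg _
      simp only [htdef]; nlinarith [hd0]
    · simp only [htdef]
      have h1 : ((min i n : ℕ) : ℝ) ≤ n := by exact_mod_cast Nat.min_le_right i n
      have : ((min i n : ℕ) : ℝ) * d ≤ n * d := mul_le_mul_of_nonneg_right h1 hd0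
      have h2 : (n : ℝ) * d = b - a := by rw [hd]; field_simp
      linarith
  have htmono : Monotone t := by
    intro i j hij
    simp only [htdef]
    have : ((min i n : ℕ) : ℝ) ≤ ((min j n : ℕ) : ℝ) := by
      exact_mod_cast min_le_min_right n hij
    nlinarith
  have ht0 : t 0 = a := by simp [htdef]
  have htn : t n = b := by
    simp only [htdef, min_self]
    rw [hd]; field_simp; ring
  -- per-segment bound
  have hseg : ∀ i, dist (u (γ (t i))) (u (γ (t (i+1)))) ≤ Nv * dist (γ (t i)) (γ (t (i+1))) := by
    intro i
    have hdist : dist (t (i+1)) (t i) < δ := by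
      have h1 : ((min (i+1) n : ℕ) : ℝ) - ((min i n : ℕ) : ℝ) ≤ 1 := by
        have : min (i+1) n ≤ min i n + 1 := by omega
        have := (Nat.cast_le (α := ℝ)).2 this
        push_cast at this ⊢; linarith
      have h2 : t i ≤ t (i+1) := htmono (Nat.le_succ i)
      rw [Real.dist_eq, abs_of_nonneg (by linarith)]
      simp only [htdef]
      have : ((min (i+1) n : ℕ) : ℝ) * d - ((min i n : ℕ) : ℝ) * d ≤ 1 * d := by nlinarith
      linarith
    have hγdist : dist (γ (t (i+1))) (γ (t i)) < r := hδ' _ (htmem _) _ (htmem _) hdist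
    have hcenter : γ (t i) ∈ γ '' Set.Icc a b := ⟨t i, htmem i, rfl⟩
    have hball : Metric.ball (γ (t i)) r ⊆ U :=
      fun w hw => hrsub (Metric.mem_thickening_iff.2 ⟨γ (t i), hcenter, hw⟩)
    have h1 : γ (t i) ∈ Metric.ball (γ (t i)) r := Metric.mem_ball_self hr
    have h2 : γ (t (i+1)) ∈ Metric.ball (γ (t i)) r := by
      rwa [Metric.mem_ball]
    have := (convex_ball (γ (t i)) r).norm_image_sub_le_of_norm_fderiv_le
      (fun z hz => hdiff z (hball hz)) (fun z hz => hbound z (hball hz)) h1 h2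
    calc dist (u (γ (t i))) (u (γ (t (i+1)))) = ‖u (γ (t (i+1))) - u (γ (t i))‖ := by
          rw [dist_comm, dist_eq_norm]
      _ ≤ Nv * ‖γ (t (i+1)) - γ (t i)‖ := this
      _ = Nv * dist (γ (t i)) (γ (t (i+1))) := by rw [dist_comm, dist_eq_norm]
  -- sum of path distances ≤ V
  have hsum : ∑ i ∈ Finset.range n, dist (γ (t i)) (γ (t (i+1))) ≤ V := by
    have hsum' : ∑ i ∈ Finset.range n, edist (γ (t (i+1))) (γ (t i))
        ≤ eVariationOn γ (Set.Icc a b) := eVariationOn.sum_le (f := γ) (n := n) htmono (fun i => htmem i)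
    have := hsum'.trans hvar
    have heq : ∑ i ∈ Finset.range n, edist (γ (t (i+1))) (γ (t i))
        = ENNReal.ofReal (∑ i ∈ Finset.range n, dist (γ (t i)) (γ (t (i+1)))) := by
      rw [ENNReal.ofReal_sum_of_nonneg (fun i _ => dist_nonneg)]
      refine Finset.sum_congr rfl fun i _ => ?_
      rw [edist_dist, dist_comm]
    rw [heq] at this
    exact (ENNReal.ofReal_le_ofReal_iff hV).1 this
  -- conclude
  have htri := dist_le_range_sum_dist (fun i => u (γ (t i))) n
  calc ‖u (γ b) - u (γ a)‖ = dist (u (γ (t 0))) (u (γ (t n))) := by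
        rw [ht0, htn, dist_eq_norm, norm_sub_rev]
    _ ≤ ∑ i ∈ Finset.range n, dist (u (γ (t i))) (u (γ (t (i+1)))) := htri
    _ ≤ ∑ i ∈ Finset.range n, Nv * dist (γ (t i)) (γ (t (i+1))) :=
        Finset.sum_le_sum fun i _ => hseg i
    _ = Nv * ∑ i ∈ Finset.range n, dist (γ (t i)) (γ (t (i+1))) := by
        rw [Finset.mul_sum]
    _ ≤ Nv * V := mul_le_mul_of_nonneg_left hsum hNv


/-- Suppose `u` is `C¹` on `Γ_κ(x') \ K₂`, has vanishing nontangential trace at `x'`,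
and `K₂ ⊂ ℝⁿ₊` is a closed ball such that every `y ∈ Γ_{κ₀}(x') \ K₂` can be joined to
`(x',0)` by a rectifiable path of length `≤ C yₙ` lying in `Γ_{κ₀}(x') \ K₂`.  Then
`|u(y)| ≤ C' yₙ · N_κ^{ℝⁿ₊ \ K₂}(∇u)(x')` on `Γ_{κ₀}(x') \ K₂`, with `C'` depending
only on `C` (the bound being stated against any upper bound `Nv` for `|∇u|` on
`Γ_κ(x') \ K₂`). -/
theorem statement13 (C : ℝ) (hC : 0 < C) :
    ∃ C' : ℝ, 0 < C' ∧
      ∀ (m M : ℕ) (κ κ₀ : ℝ), 0 < κ₀ → κ₀ < κ →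
      ∀ (x' : EuclideanSpace ℝ (Fin m)) (K₂ : Set (HS m)),
        (∃ (c : HS m) (ρ : ℝ), 0 < ht c ∧ K₂ = Metric.closedBall c ρ) →
      ∀ u : HS m → EuclideanSpace ℂ (Fin M),
        (∀ y ∈ cone κ x' \ K₂, DifferentiableAt ℝ u y) →
        Tendsto u (nhdsWithin (bpt x') (cone κ x')) (nhds 0) →
        (∀ y ∈ cone κ₀ x' \ K₂, ∃ γ : ℝ → HS m,
            γ 0 = bpt x' ∧ γ 1 = y ∧
            (∀ s ∈ Set.Ioo (0 : ℝ) 1, γ s ∈ cone κ₀ x' \ K₂) ∧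
            ContinuousOn γ (Set.Icc 0 1) ∧
            eVariationOn γ (Set.Icc 0 1) ≤ ENNReal.ofReal (C * ht y)) →
      ∀ Nv : ℝ, (∀ z ∈ cone κ x' \ K₂, ‖fderiv ℝ u z‖ ≤ Nv) →
      ∀ y ∈ cone κ₀ x' \ K₂, ‖u y‖ ≤ C' * ht y * Nv := by
  refine ⟨C, hC, ?_⟩
  intro m M κ κ₀ hκ₀ hκ x' K₂ hK₂ u hdiff htr hpath Nv hNv y hy
  obtain ⟨c, ρ, hc, rfl⟩ := hK₂
  set U : Set (HS m) := cone κ x' \ Metric.closedBall c ρ with hUdef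
  have hUopen : IsOpen U := (cone_open κ x').sdiff Metric.isClosed_closedBall
  have hsub : cone κ₀ x' ⊆ cone κ x' := cone_mono hκ.le x'
  have hyU : y ∈ U := ⟨hsub hy.1, hy.2⟩
  have hNv0 : 0 ≤ Nv := (norm_nonneg _).trans (hNv y hyU)
  have hhty : 0 < ht y := hy.1.1
  have hCy : 0 ≤ C * ht y := by positivity
  obtain ⟨γ, hγ0, hγ1, hγmem, hγcont, hγvar⟩ := hpath y hy
  have hest : ∀ ε ∈ Set.Ioo (0:ℝ) 1, ‖u y - u (γ ε)‖ ≤ Nv * (C * ht y) := by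
    intro ε hε
    have himg : ∀ t ∈ Set.Icc ε 1, γ t ∈ U := by
      intro t ht'
      rcases eq_or_lt_of_le ht'.2 with h | h
      · rw [h, hγ1]; exact hyU
      · have : γ t ∈ cone κ₀ x' \ Metric.closedBall c ρ :=
          hγmem t ⟨hε.1.trans_le ht'.1, h⟩
        exact ⟨hsub this.1, this.2⟩
    have hk := key_path hUopen (fun z hz => hdiff z hz) (fun z hz => hNv z hz) hε.2.le
      (hγcont.mono (Set.Icc_subset_Icc hε.1.le le_rfl)) himg hCy hNv0
      ((eVariationOn.mono γ (Set.Icc_subset_Icc hε.1.le le_rfl)).trans hγvar)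
    rwa [hγ1] at hk
  have hne : (nhdsWithin (0:ℝ) (Set.Ioo 0 1)).NeBot := by
    apply mem_closure_iff_nhdsWithin_neBot.1
    rw [closure_Ioo (by norm_num : (0:ℝ) ≠ 1)]
    exact ⟨le_rfl, by norm_num⟩
  have hγten : Tendsto γ (nhdsWithin 0 (Set.Ioo 0 1)) (nhdsWithin (bpt x') (cone κ x')) := by
    have h1 : Tendsto γ (nhdsWithin 0 (Set.Icc 0 1)) (nhds (bpt x')) := by
      have h2 := hγcont 0 (Set.mem_Icc.2 ⟨le_rfl, zero_le_one⟩)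
      rw [← hγ0]; exact h2
    refine tendsto_nhdsWithin_of_tendsto_nhds_of_eventually_within _
      (h1.mono_left (nhdsWithin_mono 0 Set.Ioo_subset_Icc_self)) ?_
    filter_upwards [self_mem_nhdsWithin] with s hs
    exact hsub (hγmem s hs).1
  have huten : Tendsto (fun ε => ‖u y - u (γ ε)‖) (nhdsWithin 0 (Set.Ioo 0 1))
      (nhds ‖u y - 0‖) := (tendsto_const_nhds.sub (htr.comp hγten)).norm
  rw [sub_zero] at huten
  have hfin : ‖u y‖ ≤ Nv * (C * ht y) :=
    le_of_tendsto huten (eventually_nhdsWithin_of_forall hest)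
  calc ‖u y‖ ≤ Nv * (C * ht y) := hfin
    _ = C * ht y * Nv := by ring

end
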